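/- Let h, H, Q, x be positive integers with h ≤ H < Q, Q ≪ x and H = o(x) as x → ∞. Let f : ℕ → ℂ be essentially bounded and g a sieve function of range Q with Eratosthenes transform g'. Then ∑_{1 ≤ a ≤ H} ∑_{x < n ≤ x+h} f(n)g(n−a) = (∑_{1 ≤ a ≤ H} g(x−a))·(∑_{x < n ≤ x+h} f(n)) + (H ∑_{q ≤ h} g'(q)/q)·∑_{x < n ≤ x+h} f(n) + ∑_{1 ≤ a ≤ H} ∑_{h < q ≤ H} g'(q) ∑_{x < n ≤ x+h, n ≡ a mod q} f(n) − (∑_{1 ≤ a ≤ H} ∑_{q ≤ H, q | x−a} g'(q))·∑_{x < n ≤ x+h} f(n) + O_ε(x^ε h²). -/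

import Mathlib

open Finset Filter Asymptotics

/-!
Write `N_q(m)` for the number of `a ∈ [1, H]` with `q ∣ m - a`, so that
`∑_{a ≤ H} g(m - a) = ∑_{q ≤ Q} N_q(m) g'(q)`. Once the main terms are subtracted, each
`n ∈ (x, x + h]` leaves `f(n)` times
`∑_{q ≤ h} (N_q(n) - H/q) g'(q) + ∑_{H < q ≤ Q} (N_q(n) - N_q(x)) g'(q)`.
In the first sum `|N_q(n) - H/q| ≤ 1`. In the second, `N_q(n)` and `N_q(x)` count the multiples
of `q` in `[n - H, n)` and `[x - H, x)`, so their difference is at most the number of multiples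
of `q` among the at most `2h` integers where these windows differ; summed over `q` this is at
most the total number of divisors of those integers, which is `≪ x^ε` each by the divisor bound.
Altogether the remainder is `≪ h · x^ε · (h + 2h x^ε) x^ε`.
-/

def EssBdd (f : ℕ → ℂ) : Prop :=
  ∀ ε : ℝ, 0 < ε → ∃ C : ℝ, ∀ n : ℕ, 1 ≤ n → ‖f n‖ ≤ C * (n : ℝ) ^ ε

lemma abs_ceil_sub_ceil_sub_lt_one {α : Type*} [Field α] [LinearOrder α] [IsStrictOrderedRing α]
    [FloorRing α] (a b : α) : |((⌈b⌉ - ⌈a⌉ : ℤ) : α) - (b - a)| < 1 := by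
  have := Int.le_ceil a
  have := Int.le_ceil b
  have := Int.ceil_lt_add_one a
  have := Int.ceil_lt_add_one b
  rw [abs_lt]; push_cast; constructor <;> linarith

lemma abs_card_filter_sub_card_filter_le {α : Type*} [DecidableEq α] {s t u : Finset α}
    (p : α → Prop) [DecidablePred p] (hu : s \ t ∪ t \ s ⊆ u) :
    |(#{x ∈ s | p x} : ℝ) - #{x ∈ t | p x}| ≤ #{x ∈ u | p x} := by
  set A := {x ∈ s | p x}
  set B := {x ∈ t | p x}
  have hA := card_sdiff_add_card_inter A B
  have hB := card_sdiff_add_card_inter B A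
  rw [inter_comm] at hB
  have hsub : A \ B ∪ B \ A ⊆ {x ∈ u | p x} := by
    intro x hx
    simp only [A, B, mem_union, Finset.mem_sdiff, mem_filter] at hx
    refine mem_filter.2 ⟨hu ?_, by tauto⟩
    simp only [mem_union, Finset.mem_sdiff]
    tauto
  have hcard : (#(A \ B) : ℝ) + #(B \ A) ≤ #{x ∈ u | p x} := by
    exact_mod_cast (card_union_of_disjoint disjoint_sdiff_sdiff).ge.trans (card_le_card hsub)
  rw [← hA, ← hB, abs_le]
  push_cast
  constructor <;> linarith

lemma sum_card_filter_dvd_le {s t : Finset ℕ} (ht : 0 ∉ t) :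
    ∑ q ∈ s, #{k ∈ t | q ∣ k} ≤ ∑ k ∈ t, #k.divisors := by
  have := sum_card_bipartiteAbove_eq_sum_card_bipartiteBelow (s := s) (t := t) (r := (· ∣ ·))
  simp only [bipartiteAbove, bipartiteBelow] at this
  rw [this]
  refine sum_le_sum fun k hk => card_le_card fun q hq => ?_
  rw [mem_filter] at hq
  exact Nat.mem_divisors.2 ⟨hq.2, ne_of_mem_of_not_mem hk ht⟩

lemma sum_Icc_eq_sum_Icc_add_sum_Ioc {M : Type*} [AddCommMonoid M] {a b : ℕ} (hab : a ≤ b)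
    (w : ℕ → M) :
    ∑ q ∈ Icc 1 b, w q = ∑ q ∈ Icc 1 a, w q + ∑ q ∈ Ioc a b, w q := by
  rw [← zero_add 1, Finset.Icc_add_one_left_eq_Ioc, Finset.Icc_add_one_left_eq_Ioc,
    Finset.sum_Ioc_consecutive w (Nat.zero_le a) hab]

lemma exists_add_one_le_mul_pow {c : ℝ} (hc : 1 < c) :
    ∃ M : ℝ, 1 ≤ M ∧ ∀ k : ℕ, (k : ℝ) + 1 ≤ M * c ^ k := by
  refine ⟨max 1 (c - 1)⁻¹, le_max_left _ _, fun k => ?_⟩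
  have hMs : 1 ≤ max 1 (c - 1)⁻¹ * (c - 1) := by
    rw [← div_le_iff₀ (by linarith), one_div]
    exact le_max_right _ _
  have bernoulli := one_add_mul_le_pow (a := c - 1) (by linarith) k
  rw [add_sub_cancel] at bernoulli
  calc (k : ℝ) + 1 ≤ max 1 (c - 1)⁻¹ * (1 + k * (c - 1)) := by
        nlinarith [le_max_left 1 (c - 1)⁻¹, (Nat.cast_nonneg k : (0 : ℝ) ≤ k)]
    _ ≤ max 1 (c - 1)⁻¹ * c ^ k := by gcongr

lemma Nat.rpow_eq_prod_primeFactors {n : ℕ} (hn : n ≠ 0) (δ : ℝ) :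
    (n : ℝ) ^ δ = ∏ p ∈ n.primeFactors, ((p : ℝ) ^ δ) ^ n.factorization p := by
  conv_lhs => rw [← Nat.prod_factorization_pow_eq_self hn, Finsupp.prod, Nat.support_factorization]
  push_cast
  rw [← Real.finsetProd_rpow _ _ (fun p _ => by positivity)]
  refine prod_congr rfl fun p _ => ?_
  rw [← Real.rpow_natCast, ← Real.rpow_natCast, ← Real.rpow_mul (by positivity),
    ← Real.rpow_mul (by positivity), mul_comm]

lemma Nat.exists_card_divisors_le_mul_rpow {δ : ℝ} (hδ : 0 < δ) :
    ∃ C : ℝ, ∀ n : ℕ, n ≠ 0 → (#n.divisors : ℝ) ≤ C * (n : ℝ) ^ δ := by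
  obtain ⟨M, hM, hMk⟩ := exists_add_one_le_mul_pow (Real.one_lt_rpow one_lt_two hδ)
  set T := ⌈(2 : ℝ) ^ δ⁻¹⌉₊
  -- primes `p ≥ T` satisfy `p ^ δ ≥ 2`, so only the finitely many primes below `T` cost a factor
  have hlarge : ∀ p : ℕ, T ≤ p → 2 ≤ (p : ℝ) ^ δ := fun p hp =>
    (Real.rpow_inv_le_iff_of_pos zero_le_two (Nat.cast_nonneg p) hδ).1
      ((Nat.le_ceil _).trans (Nat.cast_le.2 hp))
  have hfactor : ∀ p k : ℕ, p.Prime →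
      (k : ℝ) + 1 ≤ (if p < T then M else 1) * ((p : ℝ) ^ δ) ^ k := by
    intro p k hp
    split_ifs with hpT
    · calc (k : ℝ) + 1 ≤ M * ((2 : ℝ) ^ δ) ^ k := hMk k
        _ ≤ M * ((p : ℝ) ^ δ) ^ k := by
          gcongr; exact_mod_cast hp.two_le
    · rw [one_mul]
      calc (k : ℝ) + 1 ≤ 2 ^ k := by exact_mod_cast Nat.lt_two_pow_self
        _ ≤ ((p : ℝ) ^ δ) ^ k := by gcongr; exact hlarge p (not_lt.1 hpT)
  have hsmall : ∀ s : Finset ℕ, ∏ p ∈ s, (if p < T then M else 1) ≤ M ^ T := fun s => by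
    rw [prod_ite, prod_const, prod_const_one, mul_one]
    refine pow_le_pow_right₀ hM ((card_le_card fun p hp => ?_).trans (card_range T).le)
    exact mem_range.2 (mem_filter.1 hp).2
  refine ⟨M ^ T, fun n hn => ?_⟩
  rw [Nat.card_divisors hn, Nat.rpow_eq_prod_primeFactors hn]
  push_cast
  calc ∏ p ∈ n.primeFactors, ((n.factorization p : ℝ) + 1)
      ≤ ∏ p ∈ n.primeFactors, ((if p < T then M else 1) * ((p : ℝ) ^ δ) ^ n.factorization p) :=
        prod_le_prod (fun _ _ => by positivity)
          fun p hp => hfactor p _ (Nat.prime_of_mem_primeFactors hp)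
    _ ≤ M ^ T * ∏ p ∈ n.primeFactors, ((p : ℝ) ^ δ) ^ n.factorization p := by
        rw [prod_mul_distrib]
        gcongr
        exact hsmall _

lemma EssBdd.exists_le_mul_rpow {f : ℕ → ℂ} (hf : EssBdd f) {δ c : ℝ} (hδ : 0 < δ) (hc : 0 < c) :
    ∃ C : ℝ, 0 ≤ C ∧ ∀ (X : ℝ) (n : ℕ), 1 ≤ n → (n : ℝ) ≤ c * X → ‖f n‖ ≤ C * X ^ δ := by
  obtain ⟨C, hC⟩ := hf δ hδ
  refine ⟨max C 0 * c ^ δ, by positivity, fun X n hn hnX => ?_⟩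
  have hX : 0 ≤ X :=
    (pos_of_mul_pos_right ((zero_lt_one.trans_le (Nat.one_le_cast.2 hn)).trans_le hnX) hc.le).le
  calc ‖f n‖ ≤ C * (n : ℝ) ^ δ := hC n hn
    _ ≤ max C 0 * (c * X) ^ δ := by gcongr; exact le_max_left _ _
    _ = max C 0 * c ^ δ * X ^ δ := by rw [Real.mul_rpow hc.le hX, mul_assoc]

lemma essBdd_card_divisors : EssBdd (fun n => (#n.divisors : ℂ)) := fun δ hδ => by
  obtain ⟨C, hC⟩ := Nat.exists_card_divisors_le_mul_rpow hδ
  exact ⟨C, fun n hn => by simpa using hC n (by omega)⟩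

def shiftCount (H q m : ℕ) : ℕ := #{a ∈ Icc 1 H | q ∣ m - a}

lemma shiftCount_eq_card_Ico {H m : ℕ} (hHm : H ≤ m) (q : ℕ) :
    shiftCount H q m = #{k ∈ Ico (m - H) m | q ∣ k} := by
  refine card_bij (fun a _ => m - a) ?_ ?_ ?_
  · intro a ha
    simp only [mem_filter, mem_Icc, mem_Ico] at ha ⊢
    exact ⟨⟨by omega, by omega⟩, ha.2⟩
  · intro a ha b hb hab
    simp only [mem_filter, mem_Icc] at ha hb
    omega
  · intro k hk
    simp only [mem_filter, mem_Ico] at hk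
    refine ⟨m - k, ?_, by omega⟩
    simp only [mem_filter, mem_Icc]
    exact ⟨⟨by omega, by omega⟩, by rw [Nat.sub_sub_self (by omega)]; exact hk.2⟩

lemma shiftCount_eq_card_modEq {H m : ℕ} (hHm : H ≤ m) (q : ℕ) :
    shiftCount H q m = #{a ∈ Icc 1 H | m ≡ a [MOD q]} := by
  refine congrArg card (filter_congr fun a ha => ?_)
  rw [mem_Icc] at ha
  exact ((Nat.modEq_iff_dvd' (by omega)).symm.trans Nat.ModEq.comm)

lemma sum_Icc_sum_filter_dvd_sub_eq_sum_shiftCount_mul {R : Type*} [Semiring R] (H m : ℕ)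
    (s : Finset ℕ) (w : ℕ → R) :
    ∑ a ∈ Icc 1 H, ∑ q ∈ s with q ∣ m - a, w q = ∑ q ∈ s, shiftCount H q m * w q := by
  simp_rw [sum_filter]
  rw [sum_comm]
  refine sum_congr rfl fun q _ => ?_
  rw [← sum_filter, sum_const, nsmul_eq_mul]
  rfl

lemma abs_shiftCount_sub_div_le {H m q : ℕ} (hHm : H ≤ m) (hq : 0 < q) :
    |(shiftCount H q m : ℝ) - H / q| ≤ 1 := by
  have hcard := Nat.Ico_filter_modEq_card (m - H) m hq 0
  simp only [Nat.modEq_zero_iff_dvd, Nat.cast_zero, sub_zero] at hcard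
  rw [← shiftCount_eq_card_Ico hHm] at hcard
  set c : ℤ := ⌈(m : ℚ) / q⌉ - ⌈((m - H : ℕ) : ℚ) / q⌉
  have hc : |(c : ℚ) - H / q| < 1 := by
    have hdiff : (m : ℚ) / q - (m - H : ℕ) / q = H / q := by
      rw [Nat.cast_sub hHm]; ring
    simpa only [c, hdiff] using abs_ceil_sub_ceil_sub_lt_one ((m - H : ℕ) / (q : ℚ)) (m / (q : ℚ))
  have hq : |(shiftCount H q m : ℚ) - H / q| ≤ 1 := by
    have h0 : (0 : ℚ) ≤ H / q := by positivity
    have hmax : (shiftCount H q m : ℚ) = max (c : ℚ) 0 := by exact_mod_cast hcard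
    rw [hmax, abs_le]
    rw [abs_lt] at hc
    rcases le_total (c : ℚ) 0 with h | h
    · rw [max_eq_right h]; constructor <;> linarith
    · rw [max_eq_left h]; constructor <;> linarith
  have hR := (Rat.cast_le (K := ℝ)).2 hq
  push_cast at hR
  exact hR

lemma abs_shiftCount_sub_shiftCount_le {H x n : ℕ} (hHx : H ≤ x) (hxn : x ≤ n) (q : ℕ) :
    |(shiftCount H q n : ℝ) - shiftCount H q x| ≤ #{k ∈ Ico (x - H) (n - H) ∪ Ico x n | q ∣ k} := by
  rw [shiftCount_eq_card_Ico (hHx.trans hxn), shiftCount_eq_card_Ico hHx]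
  refine abs_card_filter_sub_card_filter_le _ fun k hk => ?_
  simp only [mem_union, Finset.mem_sdiff, mem_Ico] at hk ⊢
  omega

lemma norm_sum_shiftCount_sub_div_mul_le {H n h : ℕ} (hHn : H ≤ n) {g' : ℕ → ℂ} {G : ℝ}
    (hG : ∀ q ∈ Icc 1 h, ‖g' q‖ ≤ G) :
    ‖∑ q ∈ Icc 1 h, ((shiftCount H q n : ℂ) - H / q) * g' q‖ ≤ h * G := by
  have hterm : ∀ q ∈ Icc 1 h, ‖((shiftCount H q n : ℂ) - H / q) * g' q‖ ≤ G := fun q hq => by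
    have hcast : (shiftCount H q n : ℂ) - H / q = ((shiftCount H q n - H / q : ℝ) : ℂ) := by
      push_cast; rfl
    rw [norm_mul, hcast, Complex.norm_real, Real.norm_eq_abs]
    exact (mul_le_of_le_one_left (norm_nonneg _)
      (abs_shiftCount_sub_div_le hHn (mem_Icc.1 hq).1)).trans (hG q hq)
  simpa using norm_sum_le_of_le _ hterm

lemma norm_sum_shiftCount_sub_shiftCount_mul_le {H h x n : ℕ} (hHx : H < x) (hxn : x ≤ n)
    (hn : n ≤ x + h) {s : Finset ℕ} {g' : ℕ → ℂ} {G D : ℝ} (hG0 : 0 ≤ G) (hD0 : 0 ≤ D)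
    (hG : ∀ q ∈ s, ‖g' q‖ ≤ G) (hD : ∀ k ∈ Ico (x - H) (x + h), (#k.divisors : ℝ) ≤ D) :
    ‖∑ q ∈ s, ((shiftCount H q n : ℂ) - shiftCount H q x) * g' q‖ ≤ 2 * h * D * G := by
  set W := Ico (x - H) (n - H) ∪ Ico x n
  have hW : W ⊆ Ico (x - H) (x + h) := fun k hk => by
    simp only [W, mem_union, mem_Ico] at hk ⊢
    omega
  have hW0 : 0 ∉ W := fun h0 => by
    simp only [W, mem_union, mem_Ico] at h0
    omega
  have hWcard : (#W : ℝ) ≤ 2 * h := by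
    have : #W ≤ 2 * h := (card_union_le _ _).trans (by simp only [Nat.card_Ico]; omega)
    exact_mod_cast this
  have hterm : ∀ q ∈ s, ‖((shiftCount H q n : ℂ) - shiftCount H q x) * g' q‖
      ≤ #{k ∈ W | q ∣ k} * G := fun q hq => by
    have hcast : (shiftCount H q n : ℂ) - shiftCount H q x
        = ((shiftCount H q n - shiftCount H q x : ℝ) : ℂ) := by push_cast; rfl
    rw [norm_mul, hcast, Complex.norm_real, Real.norm_eq_abs]
    exact mul_le_mul (abs_shiftCount_sub_shiftCount_le hHx.le hxn q) (hG q hq) (norm_nonneg _)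
      (Nat.cast_nonneg _)
  calc ‖∑ q ∈ s, ((shiftCount H q n : ℂ) - shiftCount H q x) * g' q‖
      ≤ ∑ q ∈ s, (#{k ∈ W | q ∣ k} : ℝ) * G := norm_sum_le_of_le _ hterm
    _ ≤ (∑ k ∈ W, #k.divisors : ℕ) * G := by
        rw [← sum_mul]
        gcongr
        exact_mod_cast sum_card_filter_dvd_le hW0
    _ ≤ (#W * D) * G := by
        gcongr
        push_cast
        simpa using sum_le_sum fun k hk => hD k (hW hk)
    _ ≤ 2 * h * D * G := by gcongr

noncomputable def shortCorrelationError (f g g' : ℕ → ℂ) (h H x : ℕ) : ℂ :=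
  (∑ a ∈ Icc 1 H, ∑ n ∈ Ioc x (x + h), f n * g (n - a))
    - ((∑ a ∈ Icc 1 H, g (x - a)) * (∑ n ∈ Ioc x (x + h), f n)
      + ((H : ℂ) * ∑ q ∈ Icc 1 h, g' q / (q : ℂ)) * (∑ n ∈ Ioc x (x + h), f n)
      + (∑ a ∈ Icc 1 H, ∑ q ∈ Ioc h H,
          g' q * ∑ n ∈ Ioc x (x + h) with n % q = a % q, f n)
      - (∑ a ∈ Icc 1 H, ∑ q ∈ Icc 1 H with q ∣ x - a, g' q) *
          (∑ n ∈ Ioc x (x + h), f n))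

lemma sum_Icc_sum_mul_sum_filter_mod_eq_eq_sum_shiftCount_mul {R : Type*} [CommSemiring R]
    {h H x : ℕ} (hHx : H ≤ x) (f g' : ℕ → R) (s : Finset ℕ) :
    ∑ a ∈ Icc 1 H, ∑ q ∈ s, g' q * ∑ n ∈ Ioc x (x + h) with n % q = a % q, f n
      = ∑ n ∈ Ioc x (x + h), f n * ∑ q ∈ s, shiftCount H q n * g' q := by
  have hcount : ∀ n ∈ Ioc x (x + h), ∀ q, f n * (shiftCount H q n * g' q)
      = ∑ a ∈ Icc 1 H, if n % q = a % q then g' q * f n else 0 := fun n hn q => by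
    rw [shiftCount_eq_card_modEq (hHx.trans (mem_Ioc.1 hn).1.le), card_filter, Nat.cast_sum,
      sum_mul, mul_sum]
    refine sum_congr rfl fun a _ => ?_
    unfold Nat.ModEq
    split_ifs with hna <;> simp [hna, mul_comm]
  simp_rw [mul_sum, sum_filter]
  rw [sum_congr rfl fun n hn => sum_congr rfl fun q _ => hcount n hn q]
  exact sum_comm.trans ((sum_congr rfl fun q _ => sum_comm).trans sum_comm)

lemma shortCorrelationError_eq {f g g' : ℕ → ℂ} {h H Q x : ℕ}
    (hg : ∀ n, g n = ∑ q ∈ Icc 1 Q with q ∣ n, g' q) (hhH : h ≤ H) (hHQ : H ≤ Q) (hHx : H ≤ x) :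
    shortCorrelationError f g g' h H x = ∑ n ∈ Ioc x (x + h), f n *
      (∑ q ∈ Icc 1 h, ((shiftCount H q n : ℂ) - H / q) * g' q
        + ∑ q ∈ Ioc H Q, ((shiftCount H q n : ℂ) - shiftCount H q x) * g' q) := by
  simp only [shortCorrelationError, hg]
  rw [sum_comm, sum_Icc_sum_mul_sum_filter_mod_eq_eq_sum_shiftCount_mul hHx]
  simp only [← mul_sum, sum_Icc_sum_filter_dvd_sub_eq_sum_shiftCount_mul]
  have hconst : ∀ c : ℂ, c * ∑ n ∈ Ioc x (x + h), f n = ∑ n ∈ Ioc x (x + h), f n * c :=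
    fun c => by rw [mul_sum]; exact sum_congr rfl fun _ _ => mul_comm _ _
  have hmain : (H : ℂ) * ∑ q ∈ Icc 1 h, g' q / q = ∑ q ∈ Icc 1 h, H / q * g' q := by
    rw [mul_sum]; exact sum_congr rfl fun _ _ => by ring
  simp only [hconst, ← sum_add_distrib, ← sum_sub_distrib, ← mul_add, ← mul_sub]
  refine sum_congr rfl fun n _ => congrArg (f n * ·) ?_
  simp only [sum_Icc_eq_sum_Icc_add_sum_Ioc hHQ, sum_Icc_eq_sum_Icc_add_sum_Ioc hhH, hmain, sub_mul,
    sum_sub_distrib]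
  ring

theorem norm_shortCorrelationError_le {f g g' : ℕ → ℂ} {h H Q x : ℕ}
    (hg : ∀ n, g n = ∑ q ∈ Icc 1 Q with q ∣ n, g' q) (hhH : h ≤ H) (hHQ : H ≤ Q) (hHx : H < x)
    {F G D : ℝ} (hF0 : 0 ≤ F) (hG0 : 0 ≤ G) (hD0 : 0 ≤ D)
    (hF : ∀ n ∈ Ioc x (x + h), ‖f n‖ ≤ F) (hG : ∀ q ∈ Icc 1 Q, ‖g' q‖ ≤ G)
    (hD : ∀ k ∈ Ico (x - H) (x + h), (#k.divisors : ℝ) ≤ D) :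
    ‖shortCorrelationError f g g' h H x‖ ≤ F * G * (1 + 2 * D) * h ^ 2 := by
  rw [shortCorrelationError_eq hg hhH hHQ hHx.le]
  have hsmall : ∀ q ∈ Icc 1 h, ‖g' q‖ ≤ G := fun q hq =>
    hG q (Icc_subset_Icc_right (hhH.trans hHQ) hq)
  have hlarge : ∀ q ∈ Ioc H Q, ‖g' q‖ ≤ G := fun q hq => by
    rw [mem_Ioc] at hq
    exact hG q (mem_Icc.2 ⟨by omega, hq.2⟩)
  have hterm : ∀ n ∈ Ioc x (x + h), ‖f n * (∑ q ∈ Icc 1 h, ((shiftCount H q n : ℂ) - H / q) * g' q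
      + ∑ q ∈ Ioc H Q, ((shiftCount H q n : ℂ) - shiftCount H q x) * g' q)‖
      ≤ F * (h * G + 2 * h * D * G) := fun n hn => by
    have hxn := mem_Ioc.1 hn
    rw [norm_mul]
    exact mul_le_mul (hF n hn) ((norm_add_le _ _).trans (add_le_add
      (norm_sum_shiftCount_sub_div_mul_le (by omega) hsmall)
      (norm_sum_shiftCount_sub_shiftCount_mul_le hHx hxn.1.le hxn.2 hG0 hD0 hlarge hD)))
      (norm_nonneg _) hF0
  refine (norm_sum_le_of_le _ hterm).trans_eq ?_
  rw [sum_const, Nat.card_Ioc, nsmul_eq_mul, Nat.add_sub_cancel_left]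
  ring

theorem norm_shortCorrelationError_le_mul_rpow {f g g' : ℕ → ℂ} {h H Q x : ℕ} {R ε Cf Cg Cd : ℝ}
    (hg : ∀ n, g n = ∑ q ∈ Icc 1 Q with q ∣ n, g' q) (hhH : h ≤ H) (hHQ : H ≤ Q) (hHx : H < x)
    (hQx : (Q : ℝ) ≤ R * x) (hε : 0 ≤ ε) (hCf0 : 0 ≤ Cf) (hCg0 : 0 ≤ Cg) (hCd0 : 0 ≤ Cd)
    (hf : ∀ n : ℕ, 1 ≤ n → (n : ℝ) ≤ 2 * x → ‖f n‖ ≤ Cf * (x : ℝ) ^ (ε / 3))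
    (hg' : ∀ q : ℕ, 1 ≤ q → (q : ℝ) ≤ R * x → ‖g' q‖ ≤ Cg * (x : ℝ) ^ (ε / 3))
    (hd : ∀ k : ℕ, 1 ≤ k → (k : ℝ) ≤ 2 * x → (#k.divisors : ℝ) ≤ Cd * (x : ℝ) ^ (ε / 3)) :
    ‖shortCorrelationError f g g' h H x‖ ≤ Cf * Cg * (1 + 2 * Cd) * ((x : ℝ) ^ ε * h ^ 2) := by
  have hle_two_mul : ∀ k : ℕ, k ≤ x + h → (k : ℝ) ≤ 2 * x := fun k hk => by
    have : k ≤ 2 * x := by omega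
    exact_mod_cast this
  have hP : 1 ≤ (x : ℝ) ^ (ε / 3) := Real.one_le_rpow (by exact_mod_cast hHx.bot_lt) (by positivity)
  have hcube : (x : ℝ) ^ ε = ((x : ℝ) ^ (ε / 3)) ^ 3 := by
    rw [← Real.rpow_mul_natCast (Nat.cast_nonneg x)]; norm_num
  refine (norm_shortCorrelationError_le hg hhH hHQ hHx (F := Cf * (x : ℝ) ^ (ε / 3))
    (G := Cg * (x : ℝ) ^ (ε / 3)) (D := Cd * (x : ℝ) ^ (ε / 3)) (by positivity) (by positivity)
    (by positivity) (fun n hn => ?_) (fun q hq => ?_) (fun k hk => ?_)).trans ?_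
  · rw [mem_Ioc] at hn
    exact hf n (by omega) (hle_two_mul n hn.2)
  · rw [mem_Icc] at hq
    exact hg' q hq.1 ((Nat.cast_le.2 hq.2).trans hQx)
  · rw [mem_Ico] at hk
    exact hd k (by omega) (hle_two_mul k hk.2.le)
  rw [hcube]
  set P := (x : ℝ) ^ (ε / 3)
  calc Cf * P * (Cg * P) * (1 + 2 * (Cd * P)) * h ^ 2
      = Cf * Cg * P ^ 2 * h ^ 2 * (1 + 2 * Cd * P) := by ring
    _ ≤ Cf * Cg * P ^ 2 * h ^ 2 * ((1 + 2 * Cd) * P) :=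
        mul_le_mul_of_nonneg_left (by nlinarith) (by positivity)
    _ = Cf * Cg * (1 + 2 * Cd) * (P ^ 3 * h ^ 2) := by ring

lemma eventually_lt_of_isLittleO_natCast {ι : Type*} {l : Filter ι} {u v : ι → ℕ}
    (hv : ∀ i, 0 < v i) (huv : (fun i => (u i : ℝ)) =o[l] fun i => (v i : ℝ)) :
    ∀ᶠ i in l, u i < v i := by
  filter_upwards [huv.def one_half_pos] with i hi
  have hv1 : (1 : ℝ) ≤ v i := by exact_mod_cast hv i
  simp only [Real.norm_natCast] at hi
  exact_mod_cast (by linarith : (u i : ℝ) < v i)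

theorem avg_short_correlations_thm2_general
    (h H Q x : ℕ → ℕ) (hx : ∀ i, 0 < x i)
    (hhH : ∀ i, h i ≤ H i) (hHQ : ∀ i, H i < Q i)
    (hQx : (fun i => (Q i : ℝ)) =O[atTop] (fun i => (x i : ℝ)))
    (hHx : (fun i => (H i : ℝ)) =o[atTop] (fun i => (x i : ℝ)))
    (f g' : ℕ → ℂ) (hf : EssBdd f) (hg' : EssBdd g')
    (g : ℕ → ℕ → ℂ)
    (hg : ∀ i n, g i n = ∑ q ∈ (Finset.Icc 1 (Q i)).filter (fun q => q ∣ n), g' q)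
    (ε : ℝ) (hε : 0 < ε) :
    (fun i =>
        (∑ a ∈ Finset.Icc 1 (H i), ∑ n ∈ Finset.Ioc (x i) (x i + h i), f n * g i (n - a))
          - ((∑ a ∈ Finset.Icc 1 (H i), g i (x i - a)) *
                (∑ n ∈ Finset.Ioc (x i) (x i + h i), f n)
              + ((H i : ℂ) * ∑ q ∈ Finset.Icc 1 (h i), g' q / (q : ℂ)) *
                (∑ n ∈ Finset.Ioc (x i) (x i + h i), f n)
              + (∑ a ∈ Finset.Icc 1 (H i), ∑ q ∈ Finset.Ioc (h i) (H i),
                  g' q * ∑ n ∈ (Finset.Ioc (x i) (x i + h i)).filter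
                    (fun n => n % q = a % q), f n)
              - (∑ a ∈ Finset.Icc 1 (H i),
                  ∑ q ∈ (Finset.Icc 1 (H i)).filter (fun q => q ∣ x i - a), g' q) *
                (∑ n ∈ Finset.Ioc (x i) (x i + h i), f n)))
      =O[atTop] (fun i => (x i : ℝ) ^ ε * (h i : ℝ) ^ 2) := by
  show (fun i => shortCorrelationError f (g i) g' (h i) (H i) (x i)) =O[atTop] _
  obtain ⟨R, hR, hQR⟩ := hQx.exists_pos
  have hδ : 0 < ε / 3 := by positivity
  obtain ⟨Cf, hCf0, hCf⟩ := hf.exists_le_mul_rpow hδ two_pos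
  obtain ⟨Cg, hCg0, hCg⟩ := hg'.exists_le_mul_rpow hδ hR
  obtain ⟨Cd, hCd0, hCd⟩ := essBdd_card_divisors.exists_le_mul_rpow hδ two_pos
  refine IsBigO.of_bound (Cf * Cg * (1 + 2 * Cd)) ?_
  filter_upwards [hQR.bound, eventually_lt_of_isLittleO_natCast hx hHx] with i hQi hHi
  rw [Real.norm_of_nonneg (by positivity)]
  exact norm_shortCorrelationError_le_mul_rpow (hg i) (hhH i) (hHQ i).le hHi
    (by simpa using hQi) hε.le hCf0 hCg0 hCd0 (hCf _) (hCg _)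
    (fun k hk hkx => by simpa using hCd _ k hk hkx)

/-- Theorem 2: companion formula for averages of short correlations of an
essentially bounded `f` with a sieve function `g` of range `Q`, having
Eratosthenes transform `g'`, i.e. `g n = ∑_{q ∣ n, q ≤ Q} g' q`. -/
theorem avg_short_correlations_thm2
    (h H Q x : ℕ → ℕ) (hh : ∀ i, 0 < h i) (hx : ∀ i, 0 < x i)
    (hhH : ∀ i, h i ≤ H i) (hHQ : ∀ i, H i < Q i)
    (hQx : (fun i => (Q i : ℝ)) =O[atTop] (fun i => (x i : ℝ)))
    (hHx : (fun i => (H i : ℝ)) =o[atTop] (fun i => (x i : ℝ)))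
    (f g' : ℕ → ℂ) (hf : EssBdd f) (hg' : EssBdd g')
    (g : ℕ → ℕ → ℂ)
    (hg : ∀ i n, g i n = ∑ q ∈ (Finset.Icc 1 (Q i)).filter (fun q => q ∣ n), g' q)
    (ε : ℝ) (hε : 0 < ε) :
    (fun i =>
        (∑ a ∈ Finset.Icc 1 (H i), ∑ n ∈ Finset.Ioc (x i) (x i + h i), f n * g i (n - a))
          - ((∑ a ∈ Finset.Icc 1 (H i), g i (x i - a)) *
                (∑ n ∈ Finset.Ioc (x i) (x i + h i), f n)
              + ((H i : ℂ) * ∑ q ∈ Finset.Icc 1 (h i), g' q / (q : ℂ)) *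
                (∑ n ∈ Finset.Ioc (x i) (x i + h i), f n)
              + (∑ a ∈ Finset.Icc 1 (H i), ∑ q ∈ Finset.Ioc (h i) (H i),
                  g' q * ∑ n ∈ (Finset.Ioc (x i) (x i + h i)).filter
                    (fun n => n % q = a % q), f n)
              - (∑ a ∈ Finset.Icc 1 (H i),
                  ∑ q ∈ (Finset.Icc 1 (H i)).filter (fun q => q ∣ x i - a), g' q) *
                (∑ n ∈ Finset.Ioc (x i) (x i + h i), f n)))
      =O[atTop] (fun i => (x i : ℝ) ^ ε * (h i : ℝ) ^ 2) :=
  avg_short_correlations_thm2_general h H Q x hx hhH hHQ hQx hHx f g' hf hg' g hg ε hε
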